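/- arXiv:2309.16883 — 4 statements merged into one kernel-verified Lean document; each statement's English description precedes it below -/
import Mathlib

section
/- Let f : ℝ^d → ℝ^c be Lipschitz continuous with constant L(f) in the ℓ₂ norm, let x ∈ ℝ^d with true label y, and let ε > 0. Define the margin M(f(x), y) = max(0, f_y(x) − max_{k ≠ y} f_k(x)). If M(f(x), y) > √2 · L(f) · ε, then for every perturbation τ with ‖τ‖₂ ≤ ε, argmax_k f_k(x + τ) = y, i.e., f_y(x+τ) > f_k(x+τ) for all k ≠ y. -/
open scoped RealInnerProductSpace

lemma coord_diff_le (c : ℕ) (v : EuclideanSpace ℝ (Fin c)) (y k : Fin c) (hk : k ≠ y) :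
    |v y - v k| ≤ Real.sqrt 2 * ‖v‖ := by
  have h2 : (0:ℝ) ≤ 2 := by norm_num
  have hsum : (v y)^2 + (v k)^2 ≤ ‖v‖^2 := by
    rw [EuclideanSpace.norm_eq, Real.sq_sqrt (by positivity)]
    have : ({y, k} : Finset (Fin c)) ⊆ Finset.univ := Finset.subset_univ _
    calc (v y)^2 + (v k)^2 = ∑ i ∈ ({y, k} : Finset (Fin c)), ‖v i‖^2 := by
          rw [Finset.sum_pair (Ne.symm hk)]; simp [sq_abs]
      _ ≤ ∑ i, ‖v i‖^2 := Finset.sum_le_sum_of_subset_of_nonneg this (by intros; positivity)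
  have key : (v y - v k)^2 ≤ 2 * ‖v‖^2 := by nlinarith [sq_nonneg (v y + v k)]
  calc |v y - v k| = Real.sqrt ((v y - v k)^2) := (Real.sqrt_sq_eq_abs _).symm
    _ ≤ Real.sqrt (2 * ‖v‖^2) := Real.sqrt_le_sqrt key
    _ = Real.sqrt 2 * ‖v‖ := by
        rw [Real.sqrt_mul h2, Real.sqrt_sq (norm_nonneg v)]

/-- Lipschitz-margin certificate (Tsuzuku et al.): if the margin at `(x, y)` exceeds
`√2 · L · ε`, then every perturbation of norm at most `ε` keeps the prediction `y`. -/
theorem lipschitz_margin_certificate (d c : ℕ) (L : NNReal)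
    (f : EuclideanSpace ℝ (Fin d) → EuclideanSpace ℝ (Fin c))
    (hf : LipschitzWith L f)
    (x : EuclideanSpace ℝ (Fin d)) (y : Fin c)
    (hne : (Finset.univ.erase y).Nonempty)
    (ε : ℝ) (hε : 0 < ε)
    (hmargin : max 0 (f x y - (Finset.univ.erase y).sup' hne (fun k => f x k)) >
      Real.sqrt 2 * (L : ℝ) * ε) :
    ∀ τ : EuclideanSpace ℝ (Fin d), ‖τ‖ ≤ ε → ∀ k : Fin c, k ≠ y →
      f (x + τ) y > f (x + τ) k := by
  intro τ hτ k hk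
  have hLε : (0:ℝ) ≤ Real.sqrt 2 * (L : ℝ) * ε := by positivity
  have hm : f x y - (Finset.univ.erase y).sup' hne (fun k => f x k) >
      Real.sqrt 2 * (L : ℝ) * ε := by
    rcases max_cases 0 (f x y - (Finset.univ.erase y).sup' hne (fun k => f x k)) with ⟨h1, h2⟩ | ⟨h1, h2⟩
    · linarith [hmargin, h1 ▸ hmargin]
    · rwa [h1] at hmargin
  have hsup : f x k ≤ (Finset.univ.erase y).sup' hne (fun k => f x k) :=
    Finset.le_sup' _ (Finset.mem_erase.mpr ⟨hk, Finset.mem_univ k⟩)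
  have hgap : f x y - f x k > Real.sqrt 2 * (L : ℝ) * ε := by linarith
  -- Lipschitz bound on the coordinate difference
  have hlip : ‖f (x + τ) - f x‖ ≤ (L : ℝ) * ε := by
    have := hf.dist_le_mul (x + τ) x
    rw [dist_eq_norm] at this
    calc ‖f (x + τ) - f x‖ ≤ (L:ℝ) * ‖x + τ - x‖ := by simpa [dist_eq_norm] using this
      _ = (L:ℝ) * ‖τ‖ := by congr 1; simp
      _ ≤ (L:ℝ) * ε := by nlinarith [L.coe_nonneg]
  set w := f (x + τ) - f x with hw
  have hcoord : |w y - w k| ≤ Real.sqrt 2 * ((L:ℝ) * ε) :=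
    le_trans (coord_diff_le c w y k hk)
      (by nlinarith [Real.sqrt_nonneg 2, hlip])
  have hwy : w y = f (x + τ) y - f x y := by simp [hw]
  have hwk : w k = f (x + τ) k - f x k := by simp [hw]
  have habs := abs_le.mp hcoord
  rw [hwy, hwk] at habs
  have := habs.1
  nlinarith [hgap, this]
end

section
/- Let σ > 0, L > 0, r > 0, and let Z ~ N(0, σ²). Then (1/(2σ²)) · E[min{r·|Z|, 2L·Z²}] = L · erf(r / (2^{3/2} L σ)). -/
open MeasureTheory ProbabilityTheory

/-- The Gauss error function. -/
noncomputable def erf (t : ℝ) : ℝ :=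
  (2 / Real.sqrt Real.pi) * ∫ s in (0:ℝ)..t, Real.exp (-s ^ 2)

/-!
Write `a = r / (2L)`, so that `min (r|z|) (2Lz²) = 2L |z| min a |z|`. By symmetry the expectation
is a half-line integral against `exp (-c t²)` with `c = 1 / (2σ²)`. On `[0, a]` the integrand is
`t² exp (-c t²)`; integrating by parts gives `(∫₀ᵃ exp (-c t²) - a exp (-c a²)) / (2c)`, whose
boundary term cancels exactly the tail `∫ₐ^∞ a t exp (-c t²) = a exp (-c a²) / (2c)`. What remains,
`(2c)⁻¹ ∫₀ᵃ exp (-c t²)`, is an `erf` after the substitution `u = √c t`.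
-/

open Real Set Filter Topology

section GaussianIntegrals

variable {c : ℝ}

lemma hasDerivAt_neg_exp_neg_mul_sq_div (hc : c ≠ 0) (t : ℝ) :
    HasDerivAt (fun t ↦ -exp (-c * t ^ 2) / (2 * c)) (t * exp (-c * t ^ 2)) t := by
  refine ((((hasDerivAt_pow 2 t).const_mul (-c)).exp.neg).div_const (2 * c)).congr_deriv ?_
  field_simp
  ring

lemma integral_Ioi_mul_exp_neg_mul_sq (hc : 0 < c) (a : ℝ) :
    ∫ t in Ioi a, t * exp (-c * t ^ 2) = exp (-c * a ^ 2) / (2 * c) := by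
  have hlim : Tendsto (fun t ↦ -exp (-c * t ^ 2) / (2 * c)) atTop (𝓝 0) := by
    have : Tendsto (fun t : ℝ ↦ -c * t ^ 2) atTop atBot :=
      (tendsto_pow_atTop two_ne_zero).const_mul_atTop_of_neg (neg_neg_of_pos hc)
    simpa using ((tendsto_exp_atBot.comp this).neg).div_const (2 * c)
  rw [integral_Ioi_of_hasDerivAt_of_tendsto' (fun t _ ↦ hasDerivAt_neg_exp_neg_mul_sq_div hc.ne' t)
    (integrable_mul_exp_neg_mul_sq hc).integrableOn hlim]
  ring

lemma integral_sq_mul_exp_neg_mul_sq (hc : c ≠ 0) (a : ℝ) :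
    ∫ t in 0..a, t ^ 2 * exp (-c * t ^ 2) =
      ((∫ t in 0..a, exp (-c * t ^ 2)) - a * exp (-c * a ^ 2)) / (2 * c) := by
  have hparts := intervalIntegral.integral_mul_deriv_eq_deriv_mul (a := 0) (b := a)
    (fun t _ ↦ hasDerivAt_id t) (fun t _ ↦ hasDerivAt_neg_exp_neg_mul_sq_div hc t)
    intervalIntegrable_const (by apply Continuous.intervalIntegrable; fun_prop)
  simp only [id, one_mul, intervalIntegral.integral_div, intervalIntegral.integral_neg] at hparts
  have hsq : ∀ t : ℝ, t ^ 2 * exp (-c * t ^ 2) = t * (t * exp (-c * t ^ 2)) := fun t ↦ by ring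
  simp only [hsq, hparts]
  ring

lemma integral_exp_neg_mul_sq_eq_erf (hc : 0 < c) (a : ℝ) :
    ∫ t in 0..a, exp (-c * t ^ 2) = √π / (2 * √c) * erf (√c * a) := by
  have hsc : √c ≠ 0 := (sqrt_pos.2 hc).ne'
  have hsq : ∀ t, exp (-c * t ^ 2) = exp (-(√c * t) ^ 2) := fun t ↦ by
    rw [mul_pow, sq_sqrt hc.le, neg_mul]
  have hsub := intervalIntegral.integral_comp_mul_left (fun u ↦ exp (-u ^ 2)) (a := 0) (b := a) hsc
  simp only [hsq, hsub, mul_zero, smul_eq_mul, erf]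
  field_simp

lemma integral_Ioi_mul_min_mul_exp_neg_mul_sq (hc : 0 < c) {a : ℝ} (ha : 0 ≤ a) :
    ∫ t in Ioi 0, t * min a t * exp (-c * t ^ 2) = (∫ t in 0..a, exp (-c * t ^ 2)) / (2 * c) := by
  have hIoc : ∫ t in Ioc 0 a, t * min a t * exp (-c * t ^ 2) =
      ∫ t in 0..a, t ^ 2 * exp (-c * t ^ 2) := by
    rw [intervalIntegral.integral_of_le ha]
    refine setIntegral_congr_fun measurableSet_Ioc fun t ht ↦ ?_
    rw [min_eq_right ht.2]
    ring
  have hIoi : EqOn (fun t ↦ t * min a t * exp (-c * t ^ 2)) (fun t ↦ a * (t * exp (-c * t ^ 2)))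
      (Ioi a) := fun t ht ↦ by
    simp only [min_eq_left (mem_Ioi.1 ht).le]
    ring
  have hint : IntegrableOn (fun t ↦ t * min a t * exp (-c * t ^ 2)) (Ioi a) :=
    ((integrable_mul_exp_neg_mul_sq hc).const_mul a).integrableOn.congr_fun hIoi.symm
      measurableSet_Ioi
  rw [← Ioc_union_Ioi_eq_Ioi ha, setIntegral_union (Ioc_disjoint_Ioi le_rfl) measurableSet_Ioi
    (Continuous.integrableOn_Ioc (by fun_prop)) hint, hIoc,
    setIntegral_congr_fun measurableSet_Ioi hIoi, integral_const_mul,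
    integral_sq_mul_exp_neg_mul_sq hc.ne', integral_Ioi_mul_exp_neg_mul_sq hc]
  ring

end GaussianIntegrals

lemma integral_gaussianReal_comp_abs {v : NNReal} (hv : v ≠ 0) (f : ℝ → ℝ) :
    ∫ z, f |z| ∂gaussianReal 0 v =
      2 * √((2 * (v : ℝ))⁻¹ / π) * ∫ t in Ioi 0, f t * exp (-(2 * (v : ℝ))⁻¹ * t ^ 2) := by
  set c := (2 * (v : ℝ))⁻¹ with hc_def
  calc ∫ z, f |z| ∂gaussianReal 0 v
      = ∫ z, (fun t ↦ √(c / π) * (f t * exp (-c * t ^ 2))) |z| := by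
        rw [integral_gaussianReal_eq_integral_smul hv]
        congr with z
        rw [smul_eq_mul, gaussianPDFReal, sub_zero, ← sq_abs, ← sqrt_inv, hc_def]
        ring_nf
    _ = _ := by
        rw [integral_comp_abs (f := fun t ↦ √(c / π) * (f t * exp (-c * t ^ 2))),
          integral_const_mul, mul_assoc]

lemma min_mul_abs_mul_sq {k : ℝ} (hk : 0 < k) (r z : ℝ) :
    min (r * |z|) (k * z ^ 2) = k * (|z| * min (r / k) |z|) := by
  rw [← mul_assoc, mul_min_of_nonneg _ _ (by positivity), ← sq_abs z]
  congr 1 <;> field_simp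

/-- Exact Gaussian expectation: for `Z ~ N(0, σ²)`,
`(1/(2σ²)) E[min{r|Z|, 2L Z²}] = L · erf(r / (2^{3/2} L σ))`. -/
theorem gaussian_min_expectation_eq (σ L r : ℝ) (hσ : 0 < σ) (hL : 0 < L) (hr : 0 < r) :
    (1 / (2 * σ ^ 2)) *
        ∫ z, min (r * |z|) (2 * L * z ^ 2) ∂(gaussianReal 0 (Real.toNNReal (σ ^ 2))) =
      L * erf (r / (2 ^ ((3 : ℝ) / 2) * L * σ)) := by
  have hv : ((σ ^ 2).toNNReal : ℝ) = σ ^ 2 := coe_toNNReal _ (sq_nonneg σ)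
  have hc : 0 < (2 * σ ^ 2)⁻¹ := by positivity
  have harg : √(2 * σ ^ 2)⁻¹ * (r / (2 * L)) = r / (2 ^ ((3 : ℝ) / 2) * L * σ) := by
    have h32 : (2 : ℝ) ^ ((3 : ℝ) / 2) = 2 * √2 := by
      rw [show (3 : ℝ) / 2 = 1 + 1 / 2 by norm_num, rpow_add two_pos, rpow_one, ← sqrt_eq_rpow]
    rw [h32, sqrt_inv, sqrt_mul zero_le_two, sqrt_sq hσ.le]
    field_simp
  simp only [min_mul_abs_mul_sq (by positivity : 0 < 2 * L) r]
  rw [integral_const_mul,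
    integral_gaussianReal_comp_abs (f := fun t ↦ t * min (r / (2 * L)) t) (by positivity), hv,
    integral_Ioi_mul_min_mul_exp_neg_mul_sq hc (by positivity), integral_exp_neg_mul_sq_eq_erf hc,
    harg, sqrt_div' _ pi_nonneg]
  have : √(2 * σ ^ 2)⁻¹ ≠ 0 := (sqrt_pos.2 hc).ne'
  field_simp
end

section
/- Fix γ > 0 and r > 0. Define g(σ) = min{γ, r/√(2πσ²)} − γ·erf(r/(2^{3/2} γ σ)) for σ > 0. Then the supremum of g over σ > 0 is attained at σ* = r/(γ√(2π)), and g(σ*) = γ·(1 − erf(√π/2)). -/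
/-!
Writing `u = r/√(2πσ²)` for the naive bound, the improved bound is `γ·erf(√π·u/(2γ))` and
`σ ↦ u` is a bijection of `(0, ∞)`. On `u ≥ γ` the gap `γ - γ·erf(√π·u/(2γ))` decreases since
`erf` is increasing; on `u ≤ γ` the gap `u - γ·erf(√π·u/(2γ))` increases since `erf` is
`2/√π`-Lipschitz (its derivative is `2/√π · e^{-t²}`). So the maximum is at `u = γ`.
-/

open Real

lemma intervalIntegrable_exp_neg_sq (a b : ℝ) :
    IntervalIntegrable (fun s => exp (-s ^ 2)) MeasureTheory.volume a b :=
  (by fun_prop : Continuous fun s : ℝ => exp (-s ^ 2)).intervalIntegrable a b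

lemma erf_sub_erf (a b : ℝ) :
    erf b - erf a = 2 / √π * ∫ s in a..b, exp (-s ^ 2) := by
  rw [erf, erf, ← mul_sub, intervalIntegral.integral_interval_sub_left
    (intervalIntegrable_exp_neg_sq 0 b) (intervalIntegrable_exp_neg_sq 0 a)]

lemma erf_monotone : Monotone erf := by
  intro a b hab
  have hint : 0 ≤ ∫ s in a..b, exp (-s ^ 2) :=
    intervalIntegral.integral_nonneg hab fun s _ => (exp_pos _).le
  have := erf_sub_erf a b
  have : 0 ≤ 2 / √π * ∫ s in a..b, exp (-s ^ 2) := by positivity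
  linarith

lemma erf_sub_erf_le {a b : ℝ} (hab : a ≤ b) : erf b - erf a ≤ 2 / √π * (b - a) := by
  rw [erf_sub_erf]
  gcongr
  calc (∫ s in a..b, exp (-s ^ 2)) ≤ ∫ _ in a..b, (1 : ℝ) :=
        intervalIntegral.integral_mono_on hab (intervalIntegrable_exp_neg_sq a b)
          intervalIntegrable_const fun s _ => exp_le_one_iff.2 (by nlinarith [sq_nonneg s])
    _ = b - a := by simp

/-- The gap `g(σ)` written in terms of the naive bound `u = r/√(2πσ²)`. -/
noncomputable def gapOfNaiveBound (γ u : ℝ) : ℝ :=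
  min γ u - γ * erf (√π * u / (2 * γ))

lemma gapOfNaiveBound_self {γ : ℝ} (hγ : γ ≠ 0) :
    gapOfNaiveBound γ γ = γ * (1 - erf (√π / 2)) := by
  rw [gapOfNaiveBound, min_self, mul_div_mul_right _ _ hγ]
  ring

lemma gapOfNaiveBound_le_self {γ : ℝ} (hγ : 0 < γ) (u : ℝ) :
    gapOfNaiveBound γ u ≤ gapOfNaiveBound γ γ := by
  rw [gapOfNaiveBound_self hγ.ne', gapOfNaiveBound]
  rcases le_total u γ with hu | hu
  · rw [min_eq_right hu]
    have hle : √π * u / (2 * γ) ≤ √π / 2 := by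
      rw [div_le_div_iff₀ (by positivity) two_pos]
      nlinarith [sqrt_pos.2 pi_pos]
    have hlip := erf_sub_erf_le hle
    have hslope : 2 / √π * (√π / 2 - √π * u / (2 * γ)) = (γ - u) / γ := by
      field_simp [(sqrt_pos.2 pi_pos).ne']
    rw [hslope, le_div_iff₀ hγ] at hlip
    linarith
  · rw [min_eq_left hu]
    have hle : √π / 2 ≤ √π * u / (2 * γ) := by
      rw [div_le_div_iff₀ two_pos (by positivity)]
      nlinarith [sqrt_pos.2 pi_pos]
    nlinarith [erf_monotone hle]

lemma gap_eq_gapOfNaiveBound {γ σ : ℝ} (hγ : γ ≠ 0) (hσ : 0 < σ) (r : ℝ) :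
    min γ (r / √(2 * π * σ ^ 2)) - γ * erf (r / (2 ^ ((3 : ℝ) / 2) * γ * σ)) =
      gapOfNaiveBound γ (r / (√(2 * π) * σ)) := by
  have hpow : (2 : ℝ) ^ ((3 : ℝ) / 2) = 2 * √2 := by
    rw [show (3 : ℝ) / 2 = 1 + 1 / 2 by norm_num, rpow_add two_pos, rpow_one, ← sqrt_eq_rpow]
  have hπ : √π ≠ 0 := (sqrt_pos.2 pi_pos).ne'
  rw [gapOfNaiveBound, sqrt_mul (by positivity), sqrt_sq hσ.le, hpow,
    sqrt_mul zero_le_two]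
  congr 3
  field_simp

/-- The gap `g(σ) = min{γ, r/√(2πσ²)} − γ·erf(r/(2^{3/2}γσ))` is maximized over `σ > 0`
at `σ* = r/(γ√(2π))`, where it equals `γ(1 − erf(√π/2))`. -/
theorem optimal_sigma_gap (γ r : ℝ) (hγ : 0 < γ) (hr : 0 < r)
    (g : ℝ → ℝ)
    (hg : ∀ σ, g σ = min γ (r / Real.sqrt (2 * Real.pi * σ ^ 2)) -
      γ * erf (r / (2 ^ ((3 : ℝ) / 2) * γ * σ))) :
    (∀ σ : ℝ, 0 < σ → g σ ≤ g (r / (γ * Real.sqrt (2 * Real.pi)))) ∧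
      g (r / (γ * Real.sqrt (2 * Real.pi))) = γ * (1 - erf (Real.sqrt Real.pi / 2)) := by
  have hg' : ∀ σ, 0 < σ → g σ = gapOfNaiveBound γ (r / (√(2 * π) * σ)) := fun σ hσ =>
    (hg σ).trans (gap_eq_gapOfNaiveBound hγ.ne' hσ r)
  have hstar_pos : 0 < r / (γ * √(2 * π)) := by positivity
  have hstar : r / (√(2 * π) * (r / (γ * √(2 * π)))) = γ := by
    field_simp [(sqrt_pos.2 (by positivity : 0 < 2 * π)).ne']
  rw [hg' _ hstar_pos, hstar]
  exact ⟨fun σ hσ => hg' σ hσ ▸ gapOfNaiveBound_le_self hγ _, gapOfNaiveBound_self hγ.ne'⟩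
end

section
/- Let p ∈ (0,1), r ≥ 1 with p/r ∈ (0,1), and consider the optimization of E[v·Z·g(Z)] over measurable g : ℝ → [0, r] with E[g(Z)] = p for Z ~ N(0,1); the maximizer is g*(z) = r·1_{z > Φ⁻¹(1 − p/r)} and the optimal value equals (r/√(2π))·exp(−Φ⁻¹(p/r)²/2). -/
open MeasureTheory ProbabilityTheory

/-- The standard Gaussian cumulative distribution function. -/
noncomputable def stdGaussianCDF (x : ℝ) : ℝ :=
  (gaussianReal 0 1 (Set.Iic x)).toReal

/-- The standard Gaussian quantile function `Φ⁻¹`. -/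
noncomputable def stdGaussianQuantile : ℝ → ℝ :=
  Function.invFun stdGaussianCDF

/-!
If `g` takes values in `[0, r]` and `h = r·1_{f > t}`, then `(f - t)(h - g) ≥ 0` pointwise;
integrating, and using `∫ g = ∫ h`, gives `∫ f g ≤ ∫ f h` (the Neyman–Pearson, or bathtub,
argument). For `Z ~ N(0,1)` and `t = Φ⁻¹(1 - p/r)` the indicator has mean `r (1 - Φ t) = p`,
and since `z φ(z) = -φ'(z)` its objective is `r φ(t) = r φ(Φ⁻¹(p/r))`, by `Φ(-x) = 1 - Φ(x)`.
-/

open Real Set Filter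
open scoped NNReal Topology

theorem integral_mul_le_integral_mul_of_threshold {α : Type*} [MeasurableSpace α]
    {μ : Measure α} [IsFiniteMeasure μ] {f g h : α → ℝ} {t r : ℝ} (hf : Integrable f μ)
    (hg : AEStronglyMeasurable g μ) (hgr : ∀ x, g x ∈ Icc 0 r)
    (hh : ∀ x, h x = if t < f x then r else 0) (hmean : ∫ x, g x ∂μ = ∫ x, h x ∂μ) :
    ∫ x, f x * g x ∂μ ≤ ∫ x, f x * h x ∂μ := by
  have hhm : AEStronglyMeasurable h μ := by
    rw [show h = (fun y => if t < y then r else 0) ∘ f from funext hh]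
    exact (Measurable.ite measurableSet_Ioi measurable_const measurable_const).comp_aemeasurable
      hf.aemeasurable |>.aestronglyMeasurable
  have hg_bdd : ∀ x, ‖g x‖ ≤ r := fun x => by
    rw [Real.norm_of_nonneg (hgr x).1]; exact (hgr x).2
  have hh_bdd : ∀ x, ‖h x‖ ≤ |r| := fun x => by rw [hh]; split_ifs <;> simp
  have hgi : Integrable g μ := .of_bound hg r (ae_of_all _ hg_bdd)
  have hhi : Integrable h μ := .of_bound hhm |r| (ae_of_all _ hh_bdd)
  have hfg : Integrable (fun x => f x * g x) μ := hf.mul_bdd hg (ae_of_all _ hg_bdd)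
  have hfh : Integrable (fun x => f x * h x) μ := hf.mul_bdd hhm (ae_of_all _ hh_bdd)
  have hgap : 0 ≤ ∫ x, (f x - t) * (h x - g x) ∂μ := by
    refine integral_nonneg fun x => ?_
    rw [hh]
    split_ifs with hx
    · exact mul_nonneg (by linarith) (by linarith [(hgr x).2])
    · exact mul_nonneg_of_nonpos_of_nonpos (by linarith) (by linarith [(hgr x).1])
  have hexpand : ∫ x, (f x - t) * (h x - g x) ∂μ
      = (∫ x, f x * h x ∂μ - ∫ x, f x * g x ∂μ) - t * (∫ x, h x ∂μ - ∫ x, g x ∂μ) := by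
    have hring : (fun x => (f x - t) * (h x - g x))
        = fun x => (f x * h x - f x * g x) - t * (h x - g x) := by ext; ring
    have hdiff : Integrable (fun x => f x * h x - f x * g x) μ := hfh.sub hfg
    have hshift : Integrable (fun x => t * (h x - g x)) μ := (hhi.sub hgi).const_mul t
    rw [hring, integral_sub hdiff hshift, integral_sub hfh hfg,
      integral_const_mul, integral_sub hhi hgi]
  rw [hmean, sub_self, mul_zero, sub_zero] at hexpand
  linarith

lemma setIntegral_gaussianReal_eq_setIntegral_mul {μ : ℝ} {v : ℝ≥0} (hv : v ≠ 0) {s : Set ℝ}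
    (hs : MeasurableSet s) (f : ℝ → ℝ) :
    ∫ x in s, f x ∂gaussianReal μ v = ∫ x in s, gaussianPDFReal μ v x * f x := by
  rw [← integral_indicator hs, ← integral_indicator hs, integral_gaussianReal_eq_integral_smul hv]
  congr 1 with x
  by_cases hx : x ∈ s <;> simp [hx]

lemma stdGaussianCDF_eq_integral (x : ℝ) :
    stdGaussianCDF x = ∫ z in Iic x, gaussianPDFReal 0 1 z := by
  rw [stdGaussianCDF, gaussianReal_apply_eq_integral 0 one_ne_zero,
    ENNReal.toReal_ofReal (setIntegral_nonneg measurableSet_Iic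
      fun z _ => gaussianPDFReal_nonneg 0 1 z)]

lemma stdGaussianCDF_sub (a b : ℝ) :
    stdGaussianCDF b - stdGaussianCDF a = ∫ z in a..b, gaussianPDFReal 0 1 z := by
  rw [stdGaussianCDF_eq_integral, stdGaussianCDF_eq_integral]
  exact intervalIntegral.integral_Iic_sub_Iic (integrable_gaussianPDFReal 0 1).integrableOn
    (integrable_gaussianPDFReal 0 1).integrableOn

lemma continuous_stdGaussianCDF : Continuous stdGaussianCDF := by
  have hprimitive : stdGaussianCDF =
      fun b => stdGaussianCDF 0 + ∫ z in (0 : ℝ)..b, gaussianPDFReal 0 1 z := by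
    funext b; rw [← stdGaussianCDF_sub]; ring
  rw [hprimitive]
  exact continuous_const.add ((integrable_gaussianPDFReal 0 1).continuous_primitive 0)

lemma strictMono_stdGaussianCDF : StrictMono stdGaussianCDF := fun a b hab =>
  sub_pos.1 <| (stdGaussianCDF_sub a b).symm ▸ intervalIntegral.intervalIntegral_pos_of_pos
    (integrable_gaussianPDFReal 0 1).intervalIntegrable
    (gaussianPDFReal_pos 0 1 · one_ne_zero) hab

lemma stdGaussianCDF_eq_cdf : stdGaussianCDF = cdf (gaussianReal 0 1) := by
  funext x; rw [cdf_eq_real]; rfl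

lemma Ioo_subset_range_stdGaussianCDF : Ioo 0 1 ⊆ range stdGaussianCDF := by
  intro q hq
  refine mem_range_of_exists_le_of_exists_ge continuous_stdGaussianCDF ?_ ?_ <;>
    rw [stdGaussianCDF_eq_cdf]
  · exact ((tendsto_cdf_atBot _).eventually (eventually_le_nhds hq.1)).exists
  · exact ((tendsto_cdf_atTop _).eventually (eventually_ge_nhds hq.2)).exists

lemma stdGaussianCDF_stdGaussianQuantile {q : ℝ} (hq : q ∈ Ioo 0 1) :
    stdGaussianCDF (stdGaussianQuantile q) = q :=
  Function.invFun_eq (Ioo_subset_range_stdGaussianCDF hq)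

lemma measureReal_gaussianReal_Ioi (x : ℝ) :
    (gaussianReal 0 1).real (Ioi x) = 1 - stdGaussianCDF x := by
  rw [← compl_Iic, probReal_compl_eq_one_sub measurableSet_Iic]; rfl

lemma stdGaussianCDF_neg (x : ℝ) : stdGaussianCDF (-x) = 1 - stdGaussianCDF x := by
  have := nullSingletonClass_gaussianReal (μ := 0) one_ne_zero
  rw [← measureReal_gaussianReal_Ioi, measureReal_congr Ioi_ae_eq_Ici]
  change (gaussianReal 0 1).real (Iic (-x)) = _
  nth_rw 1 [← neg_zero, ← gaussianReal_map_neg]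
  rw [map_measureReal_apply measurable_neg measurableSet_Iic]
  congr 1; ext; simp

lemma stdGaussianQuantile_one_sub {q : ℝ} (hq : q ∈ Ioo 0 1) :
    stdGaussianQuantile (1 - q) = -stdGaussianQuantile q := by
  refine strictMono_stdGaussianCDF.injective ?_
  rw [stdGaussianCDF_neg, stdGaussianCDF_stdGaussianQuantile hq,
    stdGaussianCDF_stdGaussianQuantile ⟨by linarith [hq.2], by linarith [hq.1]⟩]

lemma hasDerivAt_gaussianPDFReal (μ : ℝ) (v : ℝ≥0) (x : ℝ) :
    HasDerivAt (gaussianPDFReal μ v) (-(x - μ) / v * gaussianPDFReal μ v x) x := by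
  rw [gaussianPDFReal_def]
  have hquad : HasDerivAt (fun x => -(x - μ) ^ 2 / (2 * v)) (-(2 * (x - μ)) / (2 * v)) x := by
    simpa using (((hasDerivAt_id x).sub_const μ).pow 2).neg.div_const (2 * (v : ℝ))
  refine (hquad.exp.const_mul (√(2 * π * v))⁻¹).congr_deriv ?_
  beta_reduce
  ring

lemma tendsto_gaussianPDFReal_atTop (μ : ℝ) (v : ℝ≥0) :
    Tendsto (gaussianPDFReal μ v) atTop (𝓝 0) := by
  rcases eq_or_ne v 0 with rfl | hv
  · exact (gaussianPDFReal_zero_var μ).symm ▸ tendsto_const_nhds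
  have hquad : Tendsto (fun x => -(x - μ) ^ 2 / (2 * v)) atTop atBot := by
    refine (tendsto_neg_atTop_atBot.comp (Tendsto.atTop_div_const
      (mul_pos two_pos (NNReal.coe_pos.2 (pos_iff_ne_zero.2 hv)))
      ((tendsto_pow_atTop two_ne_zero).comp
        (tendsto_atTop_add_const_right _ (-μ) tendsto_id)))).congr fun x => ?_
    simp [sub_eq_add_neg, neg_div]
  rw [gaussianPDFReal_def]
  simpa using (tendsto_exp_atBot.comp hquad).const_mul (√(2 * π * v))⁻¹

lemma gaussianPDFReal_zero_one (x : ℝ) : gaussianPDFReal 0 1 x = exp (-x ^ 2 / 2) / √(2 * π) := by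
  simp only [gaussianPDFReal_def, NNReal.coe_one, mul_one, sub_zero]
  ring

lemma integrable_gaussianPDFReal_zero_one_mul_id :
    Integrable fun z => gaussianPDFReal 0 1 z * z := by
  refine ((integrable_mul_exp_neg_mul_sq (b := 1 / 2) (by norm_num)).const_mul
    (√(2 * π))⁻¹).congr (ae_of_all _ fun z => ?_)
  simp only [gaussianPDFReal_zero_one]
  ring_nf

lemma setIntegral_Ioi_id_gaussianReal (t : ℝ) :
    ∫ z in Ioi t, z ∂gaussianReal 0 1 = gaussianPDFReal 0 1 t := by
  rw [setIntegral_gaussianReal_eq_setIntegral_mul one_ne_zero measurableSet_Ioi,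
    integral_Ioi_of_hasDerivAt_of_tendsto
    (f := fun z => -gaussianPDFReal 0 1 z) (m := 0)
    (hasDerivAt_gaussianPDFReal 0 1 t).continuousAt.neg.continuousWithinAt (fun z _ => ?_)
    integrable_gaussianPDFReal_zero_one_mul_id.integrableOn
    (by simpa using (tendsto_gaussianPDFReal_atTop 0 1).neg)]
  · ring
  · refine (hasDerivAt_gaussianPDFReal 0 1 z).neg.congr_deriv ?_
    simp only [NNReal.coe_one]
    ring

theorem neyman_pearson_gaussian_general (p r : ℝ)
    (hpr : p / r ∈ Set.Ioo (0 : ℝ) 1)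
    (gstar : ℝ → ℝ)
    (hgstar : ∀ z, gstar z = if stdGaussianQuantile (1 - p / r) < z then r else 0) :
    (∀ g : ℝ → ℝ, Measurable g → (∀ z, g z ∈ Set.Icc 0 r) →
        (∫ z, g z ∂(gaussianReal 0 1)) = p →
        (∫ z, z * g z ∂(gaussianReal 0 1)) ≤
          (r / Real.sqrt (2 * Real.pi)) *
            Real.exp (-(stdGaussianQuantile (p / r)) ^ 2 / 2)) ∧
      (∫ z, gstar z ∂(gaussianReal 0 1)) = p ∧
      (∫ z, z * gstar z ∂(gaussianReal 0 1)) =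
        (r / Real.sqrt (2 * Real.pi)) *
          Real.exp (-(stdGaussianQuantile (p / r)) ^ 2 / 2) := by
  rw [stdGaussianQuantile_one_sub hpr] at hgstar
  set q := stdGaussianQuantile (p / r)
  have hr : r ≠ 0 := by rintro rfl; simp at hpr
  have hgstar_eq : gstar = (Ioi (-q)).indicator fun _ => r := by
    ext z; simp [hgstar, indicator_apply]
  have hmass : ∫ z, gstar z ∂gaussianReal 0 1 = p := by
    rw [hgstar_eq, integral_indicator_const _ measurableSet_Ioi, measureReal_gaussianReal_Ioi,
      stdGaussianCDF_neg, stdGaussianCDF_stdGaussianQuantile hpr, sub_sub_cancel, smul_eq_mul,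
      div_mul_cancel₀ p hr]
  have hvalue : ∫ z, z * gstar z ∂gaussianReal 0 1 = r * gaussianPDFReal 0 1 (-q) := by
    have hintegrand : (fun z => z * gstar z) = (Ioi (-q)).indicator fun z => z * r := by
      ext z; simp [hgstar, indicator_apply]
    rw [hintegrand, integral_indicator measurableSet_Ioi, integral_mul_const,
      setIntegral_Ioi_id_gaussianReal, mul_comm]
  have hclosed : r * gaussianPDFReal 0 1 (-q) = r / √(2 * π) * exp (-q ^ 2 / 2) := by
    rw [gaussianPDFReal_zero_one, neg_sq]; ring
  refine ⟨fun g hg hgr hgp => ?_, hmass, hvalue.trans hclosed⟩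
  rw [← hclosed, ← hvalue]
  exact integral_mul_le_integral_mul_of_threshold ((memLp_id_gaussianReal 1).integrable le_rfl)
    hg.aestronglyMeasurable hgr hgstar (hgp.trans hmass.symm)

/-- Neyman–Pearson-type extremal problem: among measurable `g : ℝ → [0, r]` with
`E[g(Z)] = p` for `Z ~ N(0,1)`, the objective `E[Z g(Z)]` is maximized by
`g*(z) = r·1_{z > Φ⁻¹(1 − p/r)}`, with optimal value `(r/√(2π))·exp(−Φ⁻¹(p/r)²/2)`. -/
theorem neyman_pearson_gaussian (p r : ℝ) (hp : p ∈ Set.Ioo (0 : ℝ) 1)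
    (hr : 1 ≤ r) (hpr : p / r ∈ Set.Ioo (0 : ℝ) 1)
    (gstar : ℝ → ℝ)
    (hgstar : ∀ z, gstar z = if stdGaussianQuantile (1 - p / r) < z then r else 0) :
    (∀ g : ℝ → ℝ, Measurable g → (∀ z, g z ∈ Set.Icc 0 r) →
        (∫ z, g z ∂(gaussianReal 0 1)) = p →
        (∫ z, z * g z ∂(gaussianReal 0 1)) ≤
          (r / Real.sqrt (2 * Real.pi)) *
            Real.exp (-(stdGaussianQuantile (p / r)) ^ 2 / 2)) ∧
      (∫ z, gstar z ∂(gaussianReal 0 1)) = p ∧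
      (∫ z, z * gstar z ∂(gaussianReal 0 1)) =
        (r / Real.sqrt (2 * Real.pi)) *
          Real.exp (-(stdGaussianQuantile (p / r)) ^ 2 / 2) :=
  neyman_pearson_gaussian_general p r hpr gstar hgstar
end
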